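/- Let f : U → ℝⁿ be a minimal, 1-isotropic immersion with dim N₁(p) = 2, Z(p) ≠ 0 and δ(p) ≠ 0 for every p ∈ U, and assume the pedal surface g := f − Z is an immersion. Then for every p ∈ U the normal space of g satisfies span{g_x(p),g_y(p)}^⊥ = span{(Z−δ)(p), (JZ + J⊥δ)(p)} ⊕ (T(p) ⊕ N₁(p))^⊥. -/

import Mathlib

noncomputable section

open Complex Submodule Module
open scoped RealInnerProductSpace

/-- ℝⁿ as Euclidean space. -/
abbrev Euc (n : ℕ) : Type := EuclideanSpace ℝ (Fin n)
/-- ℂⁿ. -/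
abbrev EucC (n : ℕ) : Type := EuclideanSpace ℂ (Fin n)

variable {n : ℕ}

/-- Partial derivative in the `x` direction. -/
def pdx (f : ℝ × ℝ → Euc n) (p : ℝ × ℝ) : Euc n := fderiv ℝ f p (1, 0)

/-- Partial derivative in the `y` direction. -/
def pdy (f : ℝ × ℝ → Euc n) (p : ℝ × ℝ) : Euc n := fderiv ℝ f p (0, 1)

/-- Partial derivative in the `x` direction, for ℂⁿ-valued maps. -/
def pdxC (φ : ℝ × ℝ → EucC n) (p : ℝ × ℝ) : EucC n := fderiv ℝ φ p (1, 0)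

/-- Partial derivative in the `y` direction, for ℂⁿ-valued maps. -/
def pdyC (φ : ℝ × ℝ → EucC n) (p : ℝ × ℝ) : EucC n := fderiv ℝ φ p (0, 1)

/-- The inclusion ℝⁿ ⊆ ℂⁿ. -/
def cx (v : Euc n) : EucC n := WithLp.toLp 2 (fun k => (v k : ℂ))

/-- Componentwise real part. -/
def reV (w : EucC n) : Euc n := WithLp.toLp 2 (fun k => (w k).re)

/-- Componentwise imaginary part. -/
def imV (w : EucC n) : Euc n := WithLp.toLp 2 (fun k => (w k).im)

/-- The ℂ-bilinear extension of the Euclidean inner product: ⟪u,w⟫ = ∑ uₖwₖ. -/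
def bil (u w : EucC n) : ℂ := ∑ k, u k * w k

/-- The Wirtinger derivative ∂/∂z = (1/2)(∂ₓ - i ∂_y). -/
def pdz (φ : ℝ × ℝ → EucC n) : ℝ × ℝ → EucC n :=
  fun p => (1 / 2 : ℂ) • (pdxC φ p - Complex.I • pdyC φ p)

/-- The Wirtinger derivative ∂/∂z̄ = (1/2)(∂ₓ + i ∂_y). -/
def pdzbar (φ : ℝ × ℝ → EucC n) : ℝ × ℝ → EucC n :=
  fun p => (1 / 2 : ℂ) • (pdxC φ p + Complex.I • pdyC φ p)

/-- φ = f_x - i f_y. -/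
def phiOf (f : ℝ × ℝ → Euc n) : ℝ × ℝ → EucC n :=
  fun p => cx (pdx f p) - Complex.I • cx (pdy f p)

/-- Orthogonal projection onto a subspace, as a map `Euc n → Euc n`. -/
def projSub (K : Submodule ℝ (Euc n)) (v : Euc n) : Euc n :=
  (orthogonalProjection K v : Euc n)

/-- The tangent plane T(p) = span{f_x(p), f_y(p)}. -/
def TangentSp (f : ℝ × ℝ → Euc n) (p : ℝ × ℝ) : Submodule ℝ (Euc n) :=
  span ℝ {pdx f p, pdy f p}

/-- Projection onto the normal space T(p)ᗮ. -/
def nProj (f : ℝ × ℝ → Euc n) (p : ℝ × ℝ) (v : Euc n) : Euc n :=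
  v - projSub (TangentSp f p) v

/-- α₁₁ = P(f_xx). -/
def a11 (f : ℝ × ℝ → Euc n) (p : ℝ × ℝ) : Euc n := nProj f p (pdx (pdx f) p)

/-- α₁₂ = P(f_xy). -/
def a12 (f : ℝ × ℝ → Euc n) (p : ℝ × ℝ) : Euc n := nProj f p (pdx (pdy f) p)

/-- α₂₂ = P(f_yy). -/
def a22 (f : ℝ × ℝ → Euc n) (p : ℝ × ℝ) : Euc n := nProj f p (pdy (pdy f) p)

/-- The first normal space N₁(p). -/
def N1 (f : ℝ × ℝ → Euc n) (p : ℝ × ℝ) : Submodule ℝ (Euc n) :=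
  span ℝ {a11 f p, a12 f p, a22 f p}

/-- Z(p): tangential component of the position vector. -/
def Zt (f : ℝ × ℝ → Euc n) (p : ℝ × ℝ) : Euc n := projSub (TangentSp f p) (f p)

/-- The pedal surface g = f - Z (w.r.t. the origin). -/
def pedal (f : ℝ × ℝ → Euc n) : ℝ × ℝ → Euc n := fun p => f p - Zt f p

/-- δ(p): component of the position vector in N₁(p). -/
def deltaLow (f : ℝ × ℝ → Euc n) (p : ℝ × ℝ) : Euc n := projSub (N1 f p) (f p)

/-- Projection onto (T(p) ⊕ N₁(p))ᗮ. -/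
def nProj2 (f : ℝ × ℝ → Euc n) (p : ℝ × ℝ) (v : Euc n) : Euc n :=
  v - projSub (TangentSp f p ⊔ N1 f p) v

/-- The second normal space N₂(p). -/
def N2 (f : ℝ × ℝ → Euc n) (p : ℝ × ℝ) : Submodule ℝ (Euc n) :=
  span ℝ {nProj2 f p (pdx (pdx (pdx f)) p), nProj2 f p (pdx (pdx (pdy f)) p),
          nProj2 f p (pdx (pdy (pdy f)) p), nProj2 f p (pdy (pdy (pdy f)) p)}

/-- Projection onto (T(p) ⊕ N₁(p) ⊕ N₂(p))ᗮ. -/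
def nProj3 (f : ℝ × ℝ → Euc n) (p : ℝ × ℝ) (v : Euc n) : Euc n :=
  v - projSub (TangentSp f p ⊔ N1 f p ⊔ N2 f p) v

/-- The third normal space N₃(p). -/
def N3 (f : ℝ × ℝ → Euc n) (p : ℝ × ℝ) : Submodule ℝ (Euc n) :=
  span ℝ {nProj3 f p (pdx (pdx (pdx (pdx f))) p), nProj3 f p (pdx (pdx (pdx (pdy f))) p),
          nProj3 f p (pdx (pdx (pdy (pdy f))) p), nProj3 f p (pdx (pdy (pdy (pdy f))) p),
          nProj3 f p (pdy (pdy (pdy (pdy f))) p)}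

/-- Smooth immersion on `U`. -/
def IsImmersionOn (f : ℝ × ℝ → Euc n) (U : Set (ℝ × ℝ)) : Prop :=
  ContDiffOn ℝ (⊤ : ℕ∞) f U ∧ ∀ p ∈ U, LinearIndependent ℝ ![pdx f p, pdy f p]

/-- Conformal immersion on `U`. -/
def IsConformalOn (f : ℝ × ℝ → Euc n) (U : Set (ℝ × ℝ)) : Prop :=
  IsImmersionOn f U ∧ ∀ p ∈ U, (inner ℝ (pdx f p) (pdy f p) : ℝ) = 0 ∧ ‖pdx f p‖ = ‖pdy f p‖

/-- Minimal (conformal harmonic) immersion on `U`. -/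
def IsMinimalOn (f : ℝ × ℝ → Euc n) (U : Set (ℝ × ℝ)) : Prop :=
  IsConformalOn f U ∧ ∀ p ∈ U, pdx (pdx f) p + pdy (pdy f) p = 0

/-- 1-isotropic: ⟪φ′,φ′⟫ ≡ 0. -/
def IsIsotropic1On (f : ℝ × ℝ → Euc n) (U : Set (ℝ × ℝ)) : Prop :=
  ∀ p ∈ U, bil (pdz (phiOf f) p) (pdz (phiOf f) p) = 0

/-- 2-isotropic: moreover ⟪φ″,φ″⟫ ≡ 0. -/
def IsIsotropic2On (f : ℝ × ℝ → Euc n) (U : Set (ℝ × ℝ)) : Prop :=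
  IsIsotropic1On f U ∧ ∀ p ∈ U, bil (pdz (pdz (phiOf f)) p) (pdz (pdz (phiOf f)) p) = 0

/-- 3-isotropic: moreover ⟪φ‴,φ‴⟫ ≡ 0. -/
def IsIsotropic3On (f : ℝ × ℝ → Euc n) (U : Set (ℝ × ℝ)) : Prop :=
  IsIsotropic2On f U ∧
    ∀ p ∈ U, bil (pdz (pdz (pdz (phiOf f))) p) (pdz (pdz (pdz (phiOf f))) p) = 0

/-- Regular (nicely curved): dim N₁ = dim N₂ = 2 everywhere. -/
def IsRegularOn (f : ℝ × ℝ → Euc n) (U : Set (ℝ × ℝ)) : Prop :=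
  ∀ p ∈ U, finrank ℝ (N1 f p) = 2 ∧ finrank ℝ (N2 f p) = 2

/-- Substantial: the image is contained in no proper affine subspace. -/
def IsSubstantialOn (f : ℝ × ℝ → Euc n) (U : Set (ℝ × ℝ)) : Prop :=
  ∀ A : AffineSubspace ℝ (Euc n), (∀ p ∈ U, f p ∈ A) → A = ⊤

/-- ξ₁ = (α₁₁ - α₂₂)/(2‖f_x‖²). -/
def xi1 (f : ℝ × ℝ → Euc n) (p : ℝ × ℝ) : Euc n :=
  (2 * ‖pdx f p‖ ^ 2)⁻¹ • (a11 f p - a22 f p)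

/-- ξ₂ = α₁₂/‖f_x‖². -/
def xi2 (f : ℝ × ℝ → Euc n) (p : ℝ × ℝ) : Euc n :=
  (‖pdx f p‖ ^ 2)⁻¹ • a12 f p

/-- Superconformal: the curvature ellipse is a nondegenerate circle at every point. -/
def IsSuperconformalOn (f : ℝ × ℝ → Euc n) (U : Set (ℝ × ℝ)) : Prop :=
  ∀ p ∈ U, (inner ℝ (xi1 f p) (xi2 f p) : ℝ) = 0 ∧ ‖xi1 f p‖ = ‖xi2 f p‖ ∧ xi1 f p ≠ 0

/-- The Gaussian curvature K = (⟨α₁₁,α₂₂⟩ - ‖α₁₂‖²)/ρ⁴. -/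
def Kcurv (f : ℝ × ℝ → Euc n) (p : ℝ × ℝ) : ℝ :=
  ((inner ℝ (a11 f p) (a22 f p) : ℝ) - ‖a12 f p‖ ^ 2) / ‖pdx f p‖ ^ 4

/-- θ̂ = ‖Z‖² + ‖δ‖². -/
def thetaHat (f : ℝ × ℝ → Euc n) (p : ℝ × ℝ) : ℝ :=
  ‖Zt f p‖ ^ 2 + ‖deltaLow f p‖ ^ 2

/-- JZ = (⟨Z,f_x⟩f_y - ⟨Z,f_y⟩f_x)/ρ². -/
def Jz (f : ℝ × ℝ → Euc n) (p : ℝ × ℝ) : Euc n :=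
  (‖pdx f p‖ ^ 2)⁻¹ •
    ((inner ℝ (Zt f p) (pdx f p) : ℝ) • pdy f p - (inner ℝ (Zt f p) (pdy f p) : ℝ) • pdx f p)

/-- J⊥δ = (⟨δ,α₁₁⟩α₁₂ - ⟨δ,α₁₂⟩α₁₁)/‖α₁₁‖². -/
def JperpDelta (f : ℝ × ℝ → Euc n) (p : ℝ × ℝ) : Euc n :=
  (‖a11 f p‖ ^ 2)⁻¹ •
    ((inner ℝ (deltaLow f p) (a11 f p) : ℝ) • a12 f p - (inner ℝ (deltaLow f p) (a12 f p) : ℝ) • a11 f p)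

/-- ℂ-linear extension of the projection onto the normal space of `f`. -/
def nProjC (f : ℝ × ℝ → Euc n) (p : ℝ × ℝ) (w : EucC n) : EucC n :=
  cx (nProj f p (reV w)) + Complex.I • cx (nProj f p (imV w))

/-- ℂ-linear extension of the projection onto (T ⊕ N₁)ᗮ. -/
def nProj2C (f : ℝ × ℝ → Euc n) (p : ℝ × ℝ) (w : EucC n) : EucC n :=
  cx (nProj2 f p (reV w)) + Complex.I • cx (nProj2 f p (imV w))

/-- g_zz = (1/4)(g_xx - g_yy - 2i g_xy). -/
def gzz (g : ℝ × ℝ → Euc n) (p : ℝ × ℝ) : EucC n :=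
  (1 / 4 : ℂ) •
    (cx (pdx (pdx g) p) - cx (pdy (pdy g) p) - (2 * Complex.I) • cx (pdx (pdy g) p))

/-- The inversion ℐ_{p₀,R}. -/
def inversionMap (p₀ : Euc n) (R : ℝ) (q : Euc n) : Euc n :=
  p₀ + (R ^ 2 / ‖q - p₀‖ ^ 2) • (q - p₀)

/-- The mean curvature vector H = (P(g_xx) + P(g_yy))/(2‖g_x‖²). -/
def meanCurv (g : ℝ × ℝ → Euc n) (p : ℝ × ℝ) : Euc n :=
  (2 * ‖pdx g p‖ ^ 2)⁻¹ • (nProj g p (pdx (pdx g) p) + nProj g p (pdy (pdy g) p))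

/-- The pointwise normal component of a fixed vector `v` along `f`. -/
def normalComp (f : ℝ × ℝ → Euc n) (v : Euc n) : ℝ × ℝ → Euc n :=
  fun p => v - projSub (TangentSp f p) v

/-- Third directional derivative ((cos θ)∂ₓ + (sin θ)∂_y)³ f. -/
def dir3 (f : ℝ × ℝ → Euc n) (θ : ℝ) (p : ℝ × ℝ) : Euc n :=
  (Real.cos θ ^ 3) • pdx (pdx (pdx f)) p
    + (3 * Real.cos θ ^ 2 * Real.sin θ) • pdx (pdx (pdy f)) p
    + (3 * Real.cos θ * Real.sin θ ^ 2) • pdx (pdy (pdy f)) p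
    + (Real.sin θ ^ 3) • pdy (pdy (pdy f)) p
section AuxLemmas

variable {n : ℕ}

lemma inner_span_pair_eq_zero {e1 e2 u w : Euc n} (hw : w ∈ span ℝ ({e1, e2} : Set (Euc n)))
    (h1 : ⟪u, e1⟫ = 0) (h2 : ⟪u, e2⟫ = 0) : ⟪u, w⟫ = 0 := by
  obtain ⟨a, b, rfl⟩ := Submodule.mem_span_pair.mp hw
  simp only [inner_add_right, real_inner_smul_right, h1, h2]
  ring

lemma projSub_span_pair {e1 e2 : Euc n} (v : Euc n) (h12 : ⟪e1, e2⟫ = 0)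
    (h1 : e1 ≠ 0) (h2 : e2 ≠ 0) :
    projSub (span ℝ {e1, e2}) v
      = (⟪v, e1⟫ / ‖e1‖ ^ 2) • e1 + (⟪v, e2⟫ / ‖e2‖ ^ 2) • e2 := by
  unfold projSub
  apply Submodule.eq_starProjection_of_mem_of_inner_eq_zero
  · exact Submodule.mem_span_pair.mpr ⟨_, _, rfl⟩
  · intro w hw
    apply inner_span_pair_eq_zero hw
    · have he1 : ‖e1‖ ^ 2 ≠ 0 := pow_ne_zero _ (norm_ne_zero_iff.mpr h1)
      have h21 : ⟪e2, e1⟫ = (0 : ℝ) := by rw [real_inner_comm]; exact h12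
      simp only [inner_sub_left, inner_add_left, real_inner_smul_left,
        real_inner_self_eq_norm_sq]
      rw [h21]
      field_simp
      ring
    · have he2 : ‖e2‖ ^ 2 ≠ 0 := pow_ne_zero _ (norm_ne_zero_iff.mpr h2)
      simp only [inner_sub_left, inner_add_left, real_inner_smul_left,
        real_inner_self_eq_norm_sq]
      rw [h12]
      field_simp
      ring

lemma finrank_span_pair' {v w : Euc n} (h : LinearIndependent ℝ ![v, w]) :
    finrank ℝ (span ℝ ({v, w} : Set (Euc n))) = 2 := by
  have h2 := finrank_span_eq_card h
  have : Set.range ![v, w] = {v, w} := by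
    simp [Matrix.range_cons, Matrix.range_empty, Set.pair_comm]
  rw [this] at h2
  simpa using h2

variable {F : Type*} [NormedAddCommGroup F] [NormedSpace ℝ F]

lemma diffAt_of_cdOn {f : ℝ × ℝ → F} {U : Set (ℝ × ℝ)} (hU : IsOpen U)
    (hf : ContDiffOn ℝ (⊤ : ℕ∞) f U) {p : ℝ × ℝ} (hp : p ∈ U) : DifferentiableAt ℝ f p :=
  (hf.contDiffAt (hU.mem_nhds hp)).differentiableAt (by simp)

lemma contDiffOn_pd {f : ℝ × ℝ → F} {U : Set (ℝ × ℝ)} (hU : IsOpen U)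
    (hf : ContDiffOn ℝ (⊤ : ℕ∞) f U) (w : ℝ × ℝ) :
    ContDiffOn ℝ (⊤ : ℕ∞) (fun p => fderiv ℝ f p w) U :=
  (hf.fderiv_of_isOpen hU (by simp)).clm_apply contDiffOn_const

lemma pd_symm {f : ℝ × ℝ → F} {U : Set (ℝ × ℝ)} (hU : IsOpen U)
    (hf : ContDiffOn ℝ (⊤ : ℕ∞) f U) {p : ℝ × ℝ} (hp : p ∈ U) :
    fderiv ℝ (fun q => fderiv ℝ f q (1, 0)) p (0, 1)
      = fderiv ℝ (fun q => fderiv ℝ f q (0, 1)) p (1, 0) := by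
  have hev : ∀ᶠ q in nhds p, HasFDerivAt f (fderiv ℝ f q) q := by
    filter_upwards [hU.eventually_mem hp] with q hq
    exact (diffAt_of_cdOn hU hf hq).hasFDerivAt
  have hf' : DifferentiableAt ℝ (fderiv ℝ f) p :=
    diffAt_of_cdOn hU (hf.fderiv_of_isOpen hU (by simp)) hp
  have hsymm := second_derivative_symmetric_of_eventually hev hf'.hasFDerivAt
    ((1 : ℝ), (0 : ℝ)) ((0 : ℝ), (1 : ℝ))
  have e1 : fderiv ℝ (fun q => fderiv ℝ f q (1, 0)) p (0, 1)
      = (fderiv ℝ (fderiv ℝ f) p) (0, 1) (1, 0) := by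
    have := ((ContinuousLinearMap.apply ℝ F ((1 : ℝ), (0 : ℝ))).hasFDerivAt.comp p
      hf'.hasFDerivAt).fderiv
    rw [show ((ContinuousLinearMap.apply ℝ F ((1:ℝ),(0:ℝ))) ∘ (fderiv ℝ f))
        = fun q => fderiv ℝ f q (1, 0) from rfl] at this
    rw [this]; rfl
  have e2 : fderiv ℝ (fun q => fderiv ℝ f q (0, 1)) p (1, 0)
      = (fderiv ℝ (fderiv ℝ f) p) (1, 0) (0, 1) := by
    have := ((ContinuousLinearMap.apply ℝ F ((0 : ℝ), (1 : ℝ))).hasFDerivAt.comp p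
      hf'.hasFDerivAt).fderiv
    rw [show ((ContinuousLinearMap.apply ℝ F ((0:ℝ),(1:ℝ))) ∘ (fderiv ℝ f))
        = fun q => fderiv ℝ f q (0, 1) from rfl] at this
    rw [this]; rfl
  rw [e1, e2, hsymm]

end AuxLemmas
section AuxC
variable {n : ℕ}

def cxL : Euc n →L[ℝ] EucC n :=
  LinearMap.toContinuousLinearMap
    { toFun := cx
      map_add' := by
        intro u v; ext k
        simp [cx, PiLp.add_apply]
      map_smul' := by
        intro r v; ext k
        simp [cx, PiLp.smul_apply, Complex.real_smul] }

@[simp] lemma cxL_apply (v : Euc n) : (cxL v : EucC n) = cx v := rfl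

lemma isotropy_extract {a b : Euc n}
    (h : bil (cx a - Complex.I • cx b) (cx a - Complex.I • cx b) = 0) :
    (⟪a, a⟫ : ℝ) = ⟪b, b⟫ ∧ (⟪a, b⟫ : ℝ) = 0 := by
  have hterm : ∀ k : Fin n, (cx a - Complex.I • cx b) k * (cx a - Complex.I • cx b) k
      = ((a k * a k - b k * b k : ℝ) : ℂ) + ((-(2 * (a k * b k)) : ℝ) : ℂ) * Complex.I := by
    intro k
    have h1 : (cx a - Complex.I • cx b) k = (a k : ℂ) - Complex.I * (b k : ℂ) := by
      simp [cx, PiLp.sub_apply, PiLp.smul_apply, smul_eq_mul]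
    rw [h1]
    have : ((a k : ℂ) - Complex.I * b k) * ((a k : ℂ) - Complex.I * b k)
        = (a k : ℂ) * a k + (b k : ℂ) * b k * (Complex.I * Complex.I)
          - 2 * (a k * b k) * Complex.I := by ring
    rw [this, Complex.I_mul_I]
    push_cast
    ring
  rw [bil] at h
  simp only [hterm] at h
  rw [Finset.sum_add_distrib, ← Complex.ofReal_sum, ← Finset.sum_mul, ← Complex.ofReal_sum] at h
  rw [Complex.ext_iff] at h
  simp only [Complex.add_re, Complex.ofReal_re, Complex.mul_re, Complex.I_re, Complex.I_im,
    Complex.ofReal_im, Complex.add_im, Complex.mul_im, Complex.zero_re, Complex.zero_im] at h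
  obtain ⟨hre, him⟩ := h
  have hre' : (∑ k, (a k * a k - b k * b k)) = 0 := by linarith
  have him' : (∑ k, -(2 * (a k * b k))) = 0 := by linarith
  rw [Finset.sum_sub_distrib] at hre'
  rw [Finset.sum_neg_distrib, ← Finset.mul_sum] at him'
  constructor
  · simp only [PiLp.inner_apply, RCLike.inner_apply, conj_trivial]
    linarith
  · simp only [PiLp.inner_apply, RCLike.inner_apply, conj_trivial]
    simp only [mul_comm (b.ofLp _) (a.ofLp _)]
    linarith

lemma pdz_phi {f : ℝ × ℝ → Euc n} {U : Set (ℝ × ℝ)} (hU : IsOpen U)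
    (hf : ContDiffOn ℝ (⊤ : ℕ∞) f U) {p : ℝ × ℝ} (hp : p ∈ U)
    (hmin : pdx (pdx f) p + pdy (pdy f) p = 0) :
    pdz (phiOf f) p = cx (pdx (pdx f) p) - Complex.I • cx (pdx (pdy f) p) := by
  have hdx : DifferentiableAt ℝ (pdx f) p := diffAt_of_cdOn hU (contDiffOn_pd hU hf (1, 0)) hp
  have hdy : DifferentiableAt ℝ (pdy f) p := diffAt_of_cdOn hU (contDiffOn_pd hU hf (0, 1)) hp
  set D1 := fderiv ℝ (pdx f) p with hD1
  set D2 := fderiv ℝ (pdy f) p with hD2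
  have h1 : HasFDerivAt (fun q => cxL (pdx f q)) (cxL.comp D1) p :=
    cxL.hasFDerivAt.comp p hdx.hasFDerivAt
  have h2 : HasFDerivAt (fun q => cxL (pdy f q)) (cxL.comp D2) p :=
    cxL.hasFDerivAt.comp p hdy.hasFDerivAt
  have h3 : HasFDerivAt (phiOf f)
      (cxL.comp D1 - Complex.I • cxL.comp D2) p := h1.sub (h2.const_smul Complex.I)
  have hx : pdxC (phiOf f) p = cx (pdx (pdx f) p) - Complex.I • cx (pdx (pdy f) p) := by
    show fderiv ℝ (phiOf f) p (1, 0) = _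
    rw [h3.fderiv]
    rfl
  have hy : pdyC (phiOf f) p = cx (pdx (pdy f) p) + Complex.I • cx (pdx (pdx f) p) := by
    show fderiv ℝ (phiOf f) p (0, 1) = _
    rw [h3.fderiv]
    have e1 : D1 (0, 1) = pdx (pdy f) p := pd_symm hU hf hp
    have e2 : D2 (0, 1) = -pdx (pdx f) p := by
      have : pdy (pdy f) p = -pdx (pdx f) p := by
        have := hmin; linear_combination (norm := module) this
      exact this
    show cxL (D1 (0, 1)) - Complex.I • cxL (D2 (0, 1)) = _
    rw [e1, e2, map_neg]
    simp [smul_neg]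
  rw [pdz, hx, hy]
  set A := cx (pdx (pdx f) p)
  set B := cx (pdx (pdy f) p)
  have : Complex.I • (B + Complex.I • A) = Complex.I • B - A := by
    rw [smul_add, smul_smul, Complex.I_mul_I, neg_one_smul]
    abel
  rw [this]
  module

end AuxC
set_option maxHeartbeats 2000000 in
/-- The normal space of the pedal surface is
span{Z-δ, JZ+J⊥δ} ⊕ (T ⊕ N₁)ᗮ. -/
theorem pedal_normal_space
    {n : ℕ} (U : Set (ℝ × ℝ)) (hU : IsOpen U) (hUconn : IsConnected U)
    (f : ℝ × ℝ → Euc n) (hmin : IsMinimalOn f U) (hiso : IsIsotropic1On f U)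
    (hN1 : ∀ p ∈ U, Module.finrank ℝ (N1 f p) = 2)
    (hZ : ∀ p ∈ U, Zt f p ≠ 0) (hδ : ∀ p ∈ U, deltaLow f p ≠ 0)
    (hg : IsImmersionOn (pedal f) U) :
    ∀ p ∈ U, (TangentSp (pedal f) p)ᗮ =
      span ℝ {Zt f p - deltaLow f p, Jz f p + JperpDelta f p} ⊔
        (TangentSp f p ⊔ N1 f p)ᗮ := by
  intro p hp
  obtain ⟨⟨⟨hfC, hfImm⟩, hconf⟩, hharm⟩ := hmin
  -- basic abbreviations
  have hfx0 : pdx f p ≠ 0 := by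
    have h := (hfImm p hp).ne_zero 0
    simpa using h
  have hfy0 : pdy f p ≠ 0 := by
    have h := (hfImm p hp).ne_zero 1
    simpa using h
  have horth : (⟪pdx f p, pdy f p⟫ : ℝ) = 0 := (hconf p hp).1
  have hnorm : ‖pdx f p‖ = ‖pdy f p‖ := (hconf p hp).2
  have hr0 : (⟪pdx f p, pdx f p⟫ : ℝ) ≠ 0 := by
    rw [real_inner_self_eq_norm_sq]
    exact pow_ne_zero _ (norm_ne_zero_iff.mpr hfx0)
  -- differentiability
  have hdf : DifferentiableAt ℝ f p := diffAt_of_cdOn hU hfC hp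
  have hdfx : DifferentiableAt ℝ (pdx f) p := diffAt_of_cdOn hU (contDiffOn_pd hU hfC (1, 0)) hp
  have hdfy : DifferentiableAt ℝ (pdy f) p := diffAt_of_cdOn hU (contDiffOn_pd hU hfC (0, 1)) hp
  have hsymm : pdy (pdx f) p = pdx (pdy f) p := pd_symm hU hfC hp
  have hyy : pdy (pdy f) p = -pdx (pdx f) p := by
    have h := hharm p hp
    linear_combination (norm := module) h
  -- conformality differentiated
  have hconfU : ∀ q ∈ U, (⟪pdx f q, pdx f q⟫ : ℝ) - ⟪pdy f q, pdy f q⟫ = 0 ∧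
      (⟪pdx f q, pdy f q⟫ : ℝ) = 0 := by
    intro q hq
    refine ⟨?_, (hconf q hq).1⟩
    rw [real_inner_self_eq_norm_sq, real_inner_self_eq_norm_sq, (hconf q hq).2]
    ring
  have hs : (⟪pdx (pdy f) p, pdy f p⟫ : ℝ) = ⟪pdx (pdx f) p, pdx f p⟫ := by
    have hev : (fun q => (⟪pdx f q, pdx f q⟫ : ℝ) - ⟪pdy f q, pdy f q⟫)
        =ᶠ[nhds p] fun _ => (0 : ℝ) := by
      filter_upwards [hU.eventually_mem hp] with q hq
      exact (hconfU q hq).1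
    have h0 : fderiv ℝ (fun q => (⟪pdx f q, pdx f q⟫ : ℝ) - ⟪pdy f q, pdy f q⟫) p (1, 0) = 0 := by
      rw [hev.fderiv_eq, fderiv_fun_const]
      simp
    rw [fderiv_fun_sub ((hdfx.inner ℝ hdfx)) ((hdfy.inner ℝ hdfy))] at h0
    simp only [ContinuousLinearMap.coe_sub', Pi.sub_apply] at h0
    rw [fderiv_inner_apply ℝ hdfx hdfx, fderiv_inner_apply ℝ hdfy hdfy] at h0
    have e1 : fderiv ℝ (pdx f) p (1, 0) = pdx (pdx f) p := rfl
    have e2 : fderiv ℝ (pdy f) p (1, 0) = pdx (pdy f) p := rfl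
    rw [e1, e2] at h0
    linear_combination (real_inner_comm (pdy f p) (pdx (pdy f) p)
      - real_inner_comm (pdx f p) (pdx (pdx f) p) - h0) / 2
  have ht : (⟪pdx (pdy f) p, pdx f p⟫ : ℝ) = -⟪pdx (pdx f) p, pdy f p⟫ := by
    have hev : (fun q => (⟪pdx f q, pdy f q⟫ : ℝ)) =ᶠ[nhds p] fun _ => (0 : ℝ) := by
      filter_upwards [hU.eventually_mem hp] with q hq
      exact (hconfU q hq).2
    have h0 : fderiv ℝ (fun q => (⟪pdx f q, pdy f q⟫ : ℝ)) p (1, 0) = 0 := by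
      rw [hev.fderiv_eq, fderiv_fun_const]
      simp
    rw [fderiv_inner_apply ℝ hdfx hdfy] at h0
    have e1 : fderiv ℝ (pdx f) p (1, 0) = pdx (pdx f) p := rfl
    have e2 : fderiv ℝ (pdy f) p (1, 0) = pdx (pdy f) p := rfl
    rw [e1, e2] at h0
    linear_combination h0 + real_inner_comm (pdx f p) (pdx (pdy f) p)
  -- isotropy consequences
  have hiso' := hiso p hp
  rw [pdz_phi hU hfC hp (hharm p hp)] at hiso'
  obtain ⟨hn2, ho2⟩ := isotropy_extract hiso'
  -- projection onto tangent space, explicit formula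
  have hprojT : ∀ v : Euc n, projSub (TangentSp f p) v
      = (⟪v, pdx f p⟫ / ‖pdx f p‖ ^ 2) • pdx f p
        + (⟪v, pdy f p⟫ / ‖pdx f p‖ ^ 2) • pdy f p := by
    intro v
    have h := projSub_span_pair v horth hfx0 hfy0
    rw [TangentSp, h, hnorm]
  -- membership facts
  have hfxT : pdx f p ∈ TangentSp f p := subset_span (by simp)
  have hfyT : pdy f p ∈ TangentSp f p := subset_span (by simp)
  have hprojmemT : ∀ v : Euc n, projSub (TangentSp f p) v ∈ TangentSp f p := by
    intro v
    exact (orthogonalProjection (TangentSp f p) v).2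
  have hnPerp : ∀ v w : Euc n, w ∈ TangentSp f p → ⟪nProj f p v, w⟫ = 0 := by
    intro v w hw
    have h : v - projSub (TangentSp f p) v ∈ (TangentSp f p)ᗮ :=
      Submodule.sub_starProjection_mem_orthogonal (K := TangentSp f p) v
    exact ((Submodule.mem_orthogonal' _ _).mp h) w hw
  have hnPerp' : ∀ v w : Euc n, w ∈ TangentSp f p → ⟪w, nProj f p v⟫ = 0 := by
    intro v w hw
    rw [real_inner_comm]
    exact hnPerp v w hw
  -- decomposition of second derivatives
  have hfxxdec : pdx (pdx f) p = projSub (TangentSp f p) (pdx (pdx f) p) + a11 f p := by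
    rw [a11, nProj]; abel
  have hfxydec : pdx (pdy f) p = projSub (TangentSp f p) (pdx (pdy f) p) + a12 f p := by
    rw [a12, nProj]; abel
  have ha22 : a22 f p = -a11 f p := by
    rw [a22, a11, hyy, nProj, nProj, projSub, projSub, map_neg]
    push_cast
    abel
  -- alpha orthogonal to tangent vectors
  have ha11fx : (⟪a11 f p, pdx f p⟫ : ℝ) = 0 := hnPerp _ _ hfxT
  have ha11fy : (⟪a11 f p, pdy f p⟫ : ℝ) = 0 := hnPerp _ _ hfyT
  have ha12fx : (⟪a12 f p, pdx f p⟫ : ℝ) = 0 := hnPerp _ _ hfxT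
  have ha12fy : (⟪a12 f p, pdy f p⟫ : ℝ) = 0 := hnPerp _ _ hfyT
  -- key inner products of second derivatives with alphas
  have hfxxa11 : (⟪pdx (pdx f) p, a11 f p⟫ : ℝ) = ⟪a11 f p, a11 f p⟫ := by
    conv_lhs => rw [hfxxdec]
    rw [inner_add_left]
    rw [show (⟪projSub (TangentSp f p) (pdx (pdx f) p), a11 f p⟫ : ℝ) = 0 from
      hnPerp' _ _ (hprojmemT _)]
    ring
  have hfxya12 : (⟪pdx (pdy f) p, a12 f p⟫ : ℝ) = ⟪a12 f p, a12 f p⟫ := by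
    conv_lhs => rw [hfxydec]
    rw [inner_add_left]
    rw [show (⟪projSub (TangentSp f p) (pdx (pdy f) p), a12 f p⟫ : ℝ) = 0 from
      hnPerp' _ _ (hprojmemT _)]
    ring
  have hfxxa12 : (⟪pdx (pdx f) p, a12 f p⟫ : ℝ) = ⟪a11 f p, a12 f p⟫ := by
    conv_lhs => rw [hfxxdec]
    rw [inner_add_left]
    rw [show (⟪projSub (TangentSp f p) (pdx (pdx f) p), a12 f p⟫ : ℝ) = 0 from
      hnPerp' _ _ (hprojmemT _)]
    ring
  have hfxya11 : (⟪pdx (pdy f) p, a11 f p⟫ : ℝ) = ⟪a11 f p, a12 f p⟫ := by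
    conv_lhs => rw [hfxydec]
    rw [inner_add_left]
    rw [show (⟪projSub (TangentSp f p) (pdx (pdy f) p), a11 f p⟫ : ℝ) = 0 from
      hnPerp' _ _ (hprojmemT _)]
    rw [real_inner_comm (a12 f p) (a11 f p)]
    ring
  -- alpha11 ⊥ alpha12 and equal norms

  have h1211 : (⟪a11 f p, a12 f p⟫ : ℝ) = 0 := by
    rw [← hfxxa12, a12, nProj, inner_sub_right, hprojT, inner_add_right,
      real_inner_smul_right, real_inner_smul_right, hs, ht, ho2]
    ring
  have hμeq : (⟪a11 f p, a11 f p⟫ : ℝ) = ⟪a12 f p, a12 f p⟫ := by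
    rw [← hfxxa11, ← hfxya12, a11, a12, nProj, nProj, inner_sub_right, inner_sub_right,
      hprojT, hprojT, inner_add_right, inner_add_right, real_inner_smul_right,
      real_inner_smul_right, real_inner_smul_right, real_inner_smul_right, hs, ht, hn2]
    ring
  have hN1span : N1 f p = span ℝ {a11 f p, a12 f p} := by
    rw [N1, ha22]
    apply le_antisymm
    · rw [span_le]
      intro v hv
      simp only [Set.mem_insert_iff, Set.mem_singleton_iff] at hv
      rcases hv with rfl | rfl | rfl
      · exact subset_span (by simp)
      · exact subset_span (by simp)
      · exact neg_mem (subset_span (by simp))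
    · rw [span_le]
      intro v hv
      simp only [Set.mem_insert_iff, Set.mem_singleton_iff] at hv
      rcases hv with rfl | rfl
      · exact subset_span (by simp)
      · exact subset_span (by simp)
  have hμ0 : (⟪a11 f p, a11 f p⟫ : ℝ) ≠ 0 := by
    intro h0
    have h11 : a11 f p = 0 := by rwa [inner_self_eq_zero] at h0
    have h12 : a12 f p = 0 := by
      have h2 := hμeq
      rw [h0] at h2
      rwa [eq_comm, inner_self_eq_zero] at h2
    have hbot : N1 f p = ⊥ := by
      rw [hN1span, h11, h12]
      simp
    have h2 := hN1 p hp
    rw [hbot] at h2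
    simp at h2
  have ha110 : a11 f p ≠ 0 := by
    intro h
    apply hμ0
    rw [h]
    simp
  have ha120 : a12 f p ≠ 0 := by
    intro h
    apply hμ0
    rw [hμeq, h]
    simp
  have μnorm : ‖a12 f p‖ ^ 2 = ‖a11 f p‖ ^ 2 := by
    rw [← real_inner_self_eq_norm_sq, ← real_inner_self_eq_norm_sq, hμeq]
  have hμn0 : ‖a11 f p‖ ^ 2 ≠ 0 := by
    rwa [← real_inner_self_eq_norm_sq]
  have hδeq : deltaLow f p = (⟪f p, a11 f p⟫ / ‖a11 f p‖ ^ 2) • a11 f p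
      + (⟪f p, a12 f p⟫ / ‖a11 f p‖ ^ 2) • a12 f p := by
    rw [deltaLow, hN1span, projSub_span_pair (f p) h1211 ha110 ha120, μnorm]
  have hZeq : Zt f p = (⟪f p, pdx f p⟫ / ‖pdx f p‖ ^ 2) • pdx f p
      + (⟪f p, pdy f p⟫ / ‖pdx f p‖ ^ 2) • pdy f p := by
    rw [Zt, hprojT]

  -- Z as explicit function on U
  set Af : ℝ × ℝ → ℝ := fun q => ⟪f q, pdx f q⟫ / ⟪pdx f q, pdx f q⟫ with hAf
  set Bf : ℝ × ℝ → ℝ := fun q => ⟪f q, pdy f q⟫ / ⟪pdx f q, pdx f q⟫ with hBf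
  have hZfun : ∀ q ∈ U, Zt f q = Af q • pdx f q + Bf q • pdy f q := by
    intro q hq
    have hx0 : pdx f q ≠ 0 := by
      have h := (hfImm q hq).ne_zero 0
      simpa using h
    have hy0 : pdy f q ≠ 0 := by
      have h := (hfImm q hq).ne_zero 1
      simpa using h
    have h := projSub_span_pair (f q) (hconf q hq).1 hx0 hy0
    have e1 : ‖pdy f q‖ ^ 2 = ⟪pdx f q, pdx f q⟫ := by
      rw [real_inner_self_eq_norm_sq, (hconf q hq).2]
    have e2 : ‖pdx f q‖ ^ 2 = ⟪pdx f q, pdx f q⟫ := (real_inner_self_eq_norm_sq _).symm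
    rw [Zt, TangentSp, h, e1, e2]
  have hApv : Af p = ⟪f p, pdx f p⟫ / ‖pdx f p‖ ^ 2 := by
    simp only [hAf]
    rw [real_inner_self_eq_norm_sq]
  have hBpv : Bf p = ⟪f p, pdy f p⟫ / ‖pdx f p‖ ^ 2 := by
    simp only [hBf]
    rw [real_inner_self_eq_norm_sq]
  have hZp : Zt f p = Af p • pdx f p + Bf p • pdy f p := hZfun p hp
  have hev : pedal f =ᶠ[nhds p] fun q => f q - (Af q • pdx f q + Bf q • pdy f q) := by
    filter_upwards [hU.eventually_mem hp] with q hq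
    show pedal f q = f q - (Af q • pdx f q + Bf q • pdy f q)
    rw [pedal]
    rw [hZfun q hq]
  have hdA : DifferentiableAt ℝ Af p := by
    simp only [hAf]
    exact (hdf.inner ℝ hdfx).mul ((hdfx.inner ℝ hdfx).inv hr0) |>.congr_of_eventuallyEq (by
      filter_upwards with q
      rw [div_eq_mul_inv]; rfl)
  have hdB : DifferentiableAt ℝ Bf p := by
    simp only [hBf]
    exact (hdf.inner ℝ hdfy).mul ((hdfx.inner ℝ hdfx).inv hr0) |>.congr_of_eventuallyEq (by
      filter_upwards with q
      rw [div_eq_mul_inv]; rfl)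
  have hdrhs : DifferentiableAt ℝ (fun q => f q - (Af q • pdx f q + Bf q • pdy f q)) p :=
    hdf.sub ((hdA.smul hdfx).add (hdB.smul hdfy))
  have hdped : DifferentiableAt ℝ (pedal f) p := hdrhs.congr_of_eventuallyEq hev
  have hderiv : ∀ w : ℝ × ℝ, fderiv ℝ (pedal f) p w
      = fderiv ℝ f p w - (Af p • fderiv ℝ (pdx f) p w + fderiv ℝ Af p w • pdx f p
        + (Bf p • fderiv ℝ (pdy f) p w + fderiv ℝ Bf p w • pdy f p)) := by
    intro w
    rw [hev.fderiv_eq, ((hdf.hasFDerivAt).fun_sub (((hdA.hasFDerivAt).fun_smul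
      hdfx.hasFDerivAt).fun_add ((hdB.hasFDerivAt).fun_smul hdfy.hasFDerivAt))).fderiv]
    simp
  have hgx : pdx (pedal f) p = pdx f p - (Af p • pdx (pdx f) p + fderiv ℝ Af p (1, 0) • pdx f p
      + (Bf p • pdx (pdy f) p + fderiv ℝ Bf p (1, 0) • pdy f p)) := hderiv (1, 0)
  have hgy : pdy (pedal f) p = pdy f p - (Af p • pdx (pdy f) p + fderiv ℝ Af p (0, 1) • pdx f p
      + (Bf p • (-pdx (pdx f) p) + fderiv ℝ Bf p (0, 1) • pdy f p)) := by
    have h := hderiv (0, 1)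
    rw [show fderiv ℝ (pdx f) p (0, 1) = pdx (pdy f) p from hsymm,
      show fderiv ℝ (pdy f) p (0, 1) = -pdx (pdx f) p from hyy] at h
    exact h
  -- pedal surface is normal to the tangent space of f
  have hpedperp : ∀ q ∈ U, ∀ w ∈ TangentSp f q, (⟪pedal f q, w⟫ : ℝ) = 0 := by
    intro q hq w hw
    have h : f q - projSub (TangentSp f q) (f q) ∈ (TangentSp f q)ᗮ :=
      Submodule.sub_starProjection_mem_orthogonal (K := TangentSp f q) (f q)
    exact ((Submodule.mem_orthogonal' _ _).mp h) w hw
  have hZtT : Zt f p ∈ TangentSp f p := (orthogonalProjection (TangentSp f p) (f p)).2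
  have hpedfxx : (⟪pedal f p, pdx (pdx f) p⟫ : ℝ) = ⟪f p, a11 f p⟫ := by
    conv_lhs => rw [hfxxdec]
    rw [inner_add_right, hpedperp p hp _ (hprojmemT _),
      show pedal f p = f p - Zt f p from rfl, inner_sub_left,
      show (⟪Zt f p, a11 f p⟫ : ℝ) = 0 from hnPerp' _ _ hZtT]
    ring
  have hpedfxy : (⟪pedal f p, pdx (pdy f) p⟫ : ℝ) = ⟪f p, a12 f p⟫ := by
    conv_lhs => rw [hfxydec]
    rw [inner_add_right, hpedperp p hp _ (hprojmemT _),
      show pedal f p = f p - Zt f p from rfl, inner_sub_left,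
      show (⟪Zt f p, a12 f p⟫ : ℝ) = 0 from hnPerp' _ _ hZtT]
    ring
  have hFx : ∀ w : ℝ × ℝ, fderiv ℝ (fun q => (⟪pedal f q, pdx f q⟫ : ℝ)) p w = 0 := by
    intro w
    have hev0 : (fun q => (⟪pedal f q, pdx f q⟫ : ℝ)) =ᶠ[nhds p] fun _ => 0 := by
      filter_upwards [hU.eventually_mem hp] with q hq
      exact hpedperp q hq _ (subset_span (by simp))
    rw [hev0.fderiv_eq, fderiv_fun_const]
    simp
  have hFy : ∀ w : ℝ × ℝ, fderiv ℝ (fun q => (⟪pedal f q, pdy f q⟫ : ℝ)) p w = 0 := by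
    intro w
    have hev0 : (fun q => (⟪pedal f q, pdy f q⟫ : ℝ)) =ᶠ[nhds p] fun _ => 0 := by
      filter_upwards [hU.eventually_mem hp] with q hq
      exact hpedperp q hq _ (subset_span (by simp))
    rw [hev0.fderiv_eq, fderiv_fun_const]
    simp
  have hgxfx : (⟪pdx (pedal f) p, pdx f p⟫ : ℝ) = -⟪f p, a11 f p⟫ := by
    have h := hFx (1, 0)
    rw [fderiv_inner_apply ℝ hdped hdfx,
      show (fderiv ℝ (pdx f) p) (1, 0) = pdx (pdx f) p from rfl,
      show (fderiv ℝ (pedal f) p) (1, 0) = pdx (pedal f) p from rfl, hpedfxx] at h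
    linear_combination h
  have hgxfy : (⟪pdx (pedal f) p, pdy f p⟫ : ℝ) = -⟪f p, a12 f p⟫ := by
    have h := hFy (1, 0)
    rw [fderiv_inner_apply ℝ hdped hdfy,
      show (fderiv ℝ (pdy f) p) (1, 0) = pdx (pdy f) p from rfl,
      show (fderiv ℝ (pedal f) p) (1, 0) = pdx (pedal f) p from rfl, hpedfxy] at h
    linear_combination h
  have hgyfx : (⟪pdy (pedal f) p, pdx f p⟫ : ℝ) = -⟪f p, a12 f p⟫ := by
    have h := hFx (0, 1)
    rw [fderiv_inner_apply ℝ hdped hdfx,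
      show (fderiv ℝ (pdx f) p) (0, 1) = pdx (pdy f) p from hsymm,
      show (fderiv ℝ (pedal f) p) (0, 1) = pdy (pedal f) p from rfl, hpedfxy] at h
    linear_combination h
  have hgyfy : (⟪pdy (pedal f) p, pdy f p⟫ : ℝ) = ⟪f p, a11 f p⟫ := by
    have h := hFy (0, 1)
    rw [fderiv_inner_apply ℝ hdped hdfy,
      show (fderiv ℝ (pdy f) p) (0, 1) = -pdx (pdx f) p from hyy,
      show (fderiv ℝ (pedal f) p) (0, 1) = pdy (pedal f) p from rfl,
      inner_neg_right, hpedfxx] at h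
    linear_combination h

  -- comm'd orthogonality values
  have hfxa11 : (⟪pdx f p, a11 f p⟫ : ℝ) = 0 := by rw [real_inner_comm]; exact ha11fx
  have hfya11 : (⟪pdy f p, a11 f p⟫ : ℝ) = 0 := by rw [real_inner_comm]; exact ha11fy
  have hfxa12 : (⟪pdx f p, a12 f p⟫ : ℝ) = 0 := by rw [real_inner_comm]; exact ha12fx
  have hfya12 : (⟪pdy f p, a12 f p⟫ : ℝ) = 0 := by rw [real_inner_comm]; exact ha12fy
  have ha1211 : (⟪a12 f p, a11 f p⟫ : ℝ) = 0 := by rw [real_inner_comm]; exact h1211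
  -- normal components of the pedal derivatives
  have hgxa11 : (⟪pdx (pedal f) p, a11 f p⟫ : ℝ) = -(Af p * ⟪a11 f p, a11 f p⟫) := by
    rw [hgx]
    simp only [inner_sub_left, inner_add_left, real_inner_smul_left]
    rw [hfxxa11, hfxya11, h1211, hfxa11, hfya11]
    ring
  have hgxa12 : (⟪pdx (pedal f) p, a12 f p⟫ : ℝ) = -(Bf p * ⟪a11 f p, a11 f p⟫) := by
    rw [hgx]
    simp only [inner_sub_left, inner_add_left, real_inner_smul_left]
    rw [hfxxa12, hfxya12, h1211, hfxa12, hfya12, ← hμeq]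
    ring
  have hgya11 : (⟪pdy (pedal f) p, a11 f p⟫ : ℝ) = Bf p * ⟪a11 f p, a11 f p⟫ := by
    rw [hgy]
    simp only [inner_sub_left, inner_add_left, real_inner_smul_left, inner_neg_left]
    rw [hfxxa11, hfxya11, h1211, hfxa11, hfya11]
    ring
  have hgya12 : (⟪pdy (pedal f) p, a12 f p⟫ : ℝ) = -(Af p * ⟪a11 f p, a11 f p⟫) := by
    rw [hgy]
    simp only [inner_sub_left, inner_add_left, real_inner_smul_left, inner_neg_left]
    rw [hfxxa12, hfxya12, h1211, hfxa12, hfya12, ← hμeq]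
    ring
  -- values of Z against tangent vectors
  have hfyfx : (⟪pdy f p, pdx f p⟫ : ℝ) = 0 := by rw [real_inner_comm]; exact horth
  have hrn0 : ‖pdx f p‖ ^ 2 ≠ 0 := pow_ne_zero _ (norm_ne_zero_iff.mpr hfx0)
  have hZfx : (⟪Zt f p, pdx f p⟫ : ℝ) = Af p * ‖pdx f p‖ ^ 2 := by
    rw [hZp]
    simp only [inner_add_left, real_inner_smul_left]
    rw [hfyfx, real_inner_self_eq_norm_sq]
    ring
  have hZfy : (⟪Zt f p, pdy f p⟫ : ℝ) = Bf p * ‖pdx f p‖ ^ 2 := by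
    rw [hZp]
    simp only [inner_add_left, real_inner_smul_left]
    rw [horth, real_inner_self_eq_norm_sq, ← hnorm]
    ring
  have hJz2 : Jz f p = Af p • pdy f p - Bf p • pdx f p := by
    rw [Jz, hZfx, hZfy, smul_sub, smul_smul, smul_smul]
    rw [show (‖pdx f p‖ ^ 2)⁻¹ * (Af p * ‖pdx f p‖ ^ 2) = Af p by field_simp]
    rw [show (‖pdx f p‖ ^ 2)⁻¹ * (Bf p * ‖pdx f p‖ ^ 2) = Bf p by field_simp]
  -- delta inner products
  have hδa11 : (⟪deltaLow f p, a11 f p⟫ : ℝ) = ⟪f p, a11 f p⟫ := by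
    rw [hδeq]
    simp only [inner_add_left, real_inner_smul_left]
    rw [ha1211, real_inner_self_eq_norm_sq]
    field_simp
    ring
  have hδa12 : (⟪deltaLow f p, a12 f p⟫ : ℝ) = ⟪f p, a12 f p⟫ := by
    rw [hδeq]
    simp only [inner_add_left, real_inner_smul_left]
    rw [h1211, show (⟪a12 f p, a12 f p⟫ : ℝ) = ‖a11 f p‖ ^ 2 from by
      rw [← hμeq, real_inner_self_eq_norm_sq]]
    field_simp
    ring
  have hJd2 : JperpDelta f p = (⟪f p, a11 f p⟫ / ‖a11 f p‖ ^ 2) • a12 f p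
      - (⟪f p, a12 f p⟫ / ‖a11 f p‖ ^ 2) • a11 f p := by
    rw [JperpDelta, hδa11, hδa12, smul_sub, smul_smul, smul_smul,
      inv_mul_eq_div, inv_mul_eq_div]
  have hδfx : (⟪deltaLow f p, pdx f p⟫ : ℝ) = 0 := by
    rw [hδeq]
    simp only [inner_add_left, real_inner_smul_left]
    rw [ha11fx, ha12fx]
    ring
  have hδfy : (⟪deltaLow f p, pdy f p⟫ : ℝ) = 0 := by
    rw [hδeq]
    simp only [inner_add_left, real_inner_smul_left]
    rw [ha11fy, ha12fy]
    ring
  have hJdfx : (⟪JperpDelta f p, pdx f p⟫ : ℝ) = 0 := by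
    rw [hJd2]
    simp only [inner_sub_left, real_inner_smul_left]
    rw [ha11fx, ha12fx]
    ring
  have hJdfy : (⟪JperpDelta f p, pdy f p⟫ : ℝ) = 0 := by
    rw [hJd2]
    simp only [inner_sub_left, real_inner_smul_left]
    rw [ha11fy, ha12fy]
    ring
  have hJzfx : (⟪Jz f p, pdx f p⟫ : ℝ) = -(Bf p * ‖pdx f p‖ ^ 2) := by
    rw [hJz2]
    simp only [inner_sub_left, real_inner_smul_left]
    rw [hfyfx, real_inner_self_eq_norm_sq]
    ring
  have hJzfy : (⟪Jz f p, pdy f p⟫ : ℝ) = Af p * ‖pdx f p‖ ^ 2 := by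
    rw [hJz2]
    simp only [inner_sub_left, real_inner_smul_left]
    rw [horth, real_inner_self_eq_norm_sq, ← hnorm]
    ring
  -- comm'd pedal-derivative values
  have hfxgx : (⟪pdx f p, pdx (pedal f) p⟫ : ℝ) = -⟪f p, a11 f p⟫ := by
    rw [real_inner_comm]; exact hgxfx
  have hfygx : (⟪pdy f p, pdx (pedal f) p⟫ : ℝ) = -⟪f p, a12 f p⟫ := by
    rw [real_inner_comm]; exact hgxfy
  have hfxgy : (⟪pdx f p, pdy (pedal f) p⟫ : ℝ) = -⟪f p, a12 f p⟫ := by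
    rw [real_inner_comm]; exact hgyfx
  have hfygy : (⟪pdy f p, pdy (pedal f) p⟫ : ℝ) = ⟪f p, a11 f p⟫ := by
    rw [real_inner_comm]; exact hgyfy
  have ha11gx : (⟪a11 f p, pdx (pedal f) p⟫ : ℝ) = -(Af p * ⟪a11 f p, a11 f p⟫) := by
    rw [real_inner_comm]; exact hgxa11
  have ha12gx : (⟪a12 f p, pdx (pedal f) p⟫ : ℝ) = -(Bf p * ⟪a11 f p, a11 f p⟫) := by
    rw [real_inner_comm]; exact hgxa12
  have ha11gy : (⟪a11 f p, pdy (pedal f) p⟫ : ℝ) = Bf p * ⟪a11 f p, a11 f p⟫ := by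
    rw [real_inner_comm]; exact hgya11
  have ha12gy : (⟪a12 f p, pdy (pedal f) p⟫ : ℝ) = -(Af p * ⟪a11 f p, a11 f p⟫) := by
    rw [real_inner_comm]; exact hgya12
  -- the two generators are orthogonal to the pedal tangent vectors
  have hv1gx : (⟪Zt f p - deltaLow f p, pdx (pedal f) p⟫ : ℝ) = 0 := by
    rw [inner_sub_left, hZp, hδeq]
    simp only [inner_add_left, real_inner_smul_left]
    rw [hfxgx, hfygx, ha11gx, ha12gx, real_inner_self_eq_norm_sq]
    field_simp
    ring
  have hv1gy : (⟪Zt f p - deltaLow f p, pdy (pedal f) p⟫ : ℝ) = 0 := by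
    rw [inner_sub_left, hZp, hδeq]
    simp only [inner_add_left, real_inner_smul_left]
    rw [hfxgy, hfygy, ha11gy, ha12gy, real_inner_self_eq_norm_sq]
    field_simp
    ring
  have hv2gx : (⟪Jz f p + JperpDelta f p, pdx (pedal f) p⟫ : ℝ) = 0 := by
    rw [inner_add_left, hJz2, hJd2]
    simp only [inner_sub_left, real_inner_smul_left]
    rw [hfxgx, hfygx, ha11gx, ha12gx, real_inner_self_eq_norm_sq]
    field_simp
    ring
  have hv2gy : (⟪Jz f p + JperpDelta f p, pdy (pedal f) p⟫ : ℝ) = 0 := by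
    rw [inner_add_left, hJz2, hJd2]
    simp only [inner_sub_left, real_inner_smul_left]
    rw [hfxgy, hfygy, ha11gy, ha12gy, real_inner_self_eq_norm_sq]
    field_simp
    ring

  -- memberships in W = T ⊔ N1
  have ha11N1 : a11 f p ∈ N1 f p := by
    rw [N1]
    exact subset_span (by simp)
  have ha12N1 : a12 f p ∈ N1 f p := by
    rw [N1]
    exact subset_span (by simp)
  have hfxxW : pdx (pdx f) p ∈ TangentSp f p ⊔ N1 f p := by
    rw [hfxxdec]
    exact add_mem (Submodule.mem_sup_left (hprojmemT _)) (Submodule.mem_sup_right ha11N1)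
  have hfxyW : pdx (pdy f) p ∈ TangentSp f p ⊔ N1 f p := by
    rw [hfxydec]
    exact add_mem (Submodule.mem_sup_left (hprojmemT _)) (Submodule.mem_sup_right ha12N1)
  have hgxW : pdx (pedal f) p ∈ TangentSp f p ⊔ N1 f p := by
    rw [hgx]
    exact sub_mem (Submodule.mem_sup_left hfxT)
      (add_mem (add_mem (smul_mem _ _ hfxxW) (smul_mem _ _ (Submodule.mem_sup_left hfxT)))
        (add_mem (smul_mem _ _ hfxyW) (smul_mem _ _ (Submodule.mem_sup_left hfyT))))
  have hgyW : pdy (pedal f) p ∈ TangentSp f p ⊔ N1 f p := by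
    rw [hgy]
    exact sub_mem (Submodule.mem_sup_left hfyT)
      (add_mem (add_mem (smul_mem _ _ hfxyW) (smul_mem _ _ (Submodule.mem_sup_left hfxT)))
        (add_mem (smul_mem _ _ (neg_mem hfxxW)) (smul_mem _ _ (Submodule.mem_sup_left hfyT))))
  have hδN1 : deltaLow f p ∈ N1 f p := (orthogonalProjection (N1 f p) (f p)).2
  have hv1W : Zt f p - deltaLow f p ∈ TangentSp f p ⊔ N1 f p :=
    sub_mem (Submodule.mem_sup_left hZtT) (Submodule.mem_sup_right hδN1)
  have hv2W : Jz f p + JperpDelta f p ∈ TangentSp f p ⊔ N1 f p := by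
    rw [hJz2, hJd2]
    exact add_mem
      (sub_mem (Submodule.mem_sup_left (smul_mem _ _ hfyT))
        (Submodule.mem_sup_left (smul_mem _ _ hfxT)))
      (sub_mem (Submodule.mem_sup_right (smul_mem _ _ ha12N1))
        (Submodule.mem_sup_right (smul_mem _ _ ha11N1)))
  -- linear independence of the two generators
  have hZ0 : Af p • pdx f p + Bf p • pdy f p ≠ 0 := by
    rw [← hZp]
    exact hZ p hp
  have hAB : Af p ^ 2 + Bf p ^ 2 ≠ 0 := by
    intro h
    apply hZ0
    have hA0 : Af p = 0 := by
      have h2 : Af p ^ 2 ≤ Af p ^ 2 + Bf p ^ 2 := le_add_of_nonneg_right (sq_nonneg _)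
      rw [h] at h2
      exact pow_eq_zero_iff two_ne_zero |>.mp (le_antisymm h2 (sq_nonneg _))
    have hB0 : Bf p = 0 := by
      have h2 : Bf p ^ 2 ≤ Af p ^ 2 + Bf p ^ 2 := le_add_of_nonneg_left (sq_nonneg _)
      rw [h] at h2
      exact pow_eq_zero_iff two_ne_zero |>.mp (le_antisymm h2 (sq_nonneg _))
    rw [hA0, hB0]
    simp
  have hli : LinearIndependent ℝ ![Zt f p - deltaLow f p, Jz f p + JperpDelta f p] := by
    rw [LinearIndependent.pair_iff]
    intro sc t hst
    have e1 : sc * (Af p * ‖pdx f p‖ ^ 2) + t * (-(Bf p * ‖pdx f p‖ ^ 2)) = 0 := by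
      have h := congrArg (fun w => (⟪w, pdx f p⟫ : ℝ)) hst
      simp only [inner_add_left, inner_sub_left, real_inner_smul_left, inner_zero_left] at h
      rw [hZfx, hδfx, hJzfx, hJdfx] at h
      linear_combination h
    have e2 : sc * (Bf p * ‖pdx f p‖ ^ 2) + t * (Af p * ‖pdx f p‖ ^ 2) = 0 := by
      have h := congrArg (fun w => (⟪w, pdy f p⟫ : ℝ)) hst
      simp only [inner_add_left, inner_sub_left, real_inner_smul_left, inner_zero_left] at h
      rw [hZfy, hδfy, hJzfy, hJdfy] at h
      linear_combination h
    constructor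
    · have h3 : sc * ((Af p ^ 2 + Bf p ^ 2) * ‖pdx f p‖ ^ 2) = 0 := by
        linear_combination Af p * e1 + Bf p * e2
      exact (mul_eq_zero.mp h3).resolve_right (mul_ne_zero hAB hrn0)
    · have h3 : t * ((Af p ^ 2 + Bf p ^ 2) * ‖pdx f p‖ ^ 2) = 0 := by
        linear_combination Af p * e2 - Bf p * e1
      exact (mul_eq_zero.mp h3).resolve_right (mul_ne_zero hAB hrn0)
  -- the span of the pedal tangent vectors
  have hTgW : TangentSp (pedal f) p ≤ TangentSp f p ⊔ N1 f p := by
    have hsub : ({pdx (pedal f) p, pdy (pedal f) p} : Set (Euc n))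
        ⊆ (TangentSp f p ⊔ N1 f p : Submodule ℝ (Euc n)) := by
      intro v hv
      simp only [Set.mem_insert_iff, Set.mem_singleton_iff] at hv
      rcases hv with rfl | rfl
      · exact hgxW
      · exact hgyW
    exact span_le.mpr hsub
  -- RHS ≤ LHS
  have hle : span ℝ {Zt f p - deltaLow f p, Jz f p + JperpDelta f p}
      ⊔ (TangentSp f p ⊔ N1 f p)ᗮ ≤ (TangentSp (pedal f) p)ᗮ := by
    apply sup_le
    · have hsub : ({Zt f p - deltaLow f p, Jz f p + JperpDelta f p} : Set (Euc n))
          ⊆ ((TangentSp (pedal f) p)ᗮ : Submodule ℝ (Euc n)) := by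
        intro v hv
        simp only [Set.mem_insert_iff, Set.mem_singleton_iff] at hv
        rcases hv with rfl | rfl
        · exact (Submodule.mem_orthogonal' _ _).mpr
            (fun u hu => inner_span_pair_eq_zero hu hv1gx hv1gy)
        · exact (Submodule.mem_orthogonal' _ _).mpr
            (fun u hu => inner_span_pair_eq_zero hu hv2gx hv2gy)
      exact span_le.mpr hsub
    · exact Submodule.orthogonal_le hTgW
  -- dimension count
  have hTg2 : finrank ℝ (TangentSp (pedal f) p) = 2 := finrank_span_pair' (hg.2 p hp)
  have hT2 : finrank ℝ (TangentSp f p) = 2 := finrank_span_pair' (hfImm p hp)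
  have hS2 : finrank ℝ (span ℝ ({Zt f p - deltaLow f p, Jz f p + JperpDelta f p} : Set (Euc n)))
      = 2 := finrank_span_pair' hli
  have hN1T : N1 f p ≤ (TangentSp f p)ᗮ := by
    rw [hN1span]
    apply span_le.mpr
    intro v hv
    simp only [Set.mem_insert_iff, Set.mem_singleton_iff] at hv
    rcases hv with rfl | rfl
    · exact Submodule.sub_starProjection_mem_orthogonal (K := TangentSp f p) (pdx (pdx f) p)
    · exact Submodule.sub_starProjection_mem_orthogonal (K := TangentSp f p) (pdx (pdy f) p)
  have hTN1 : TangentSp f p ⊓ N1 f p = ⊥ := by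
    apply le_antisymm _ bot_le
    refine le_trans (inf_le_inf_left _ hN1T) ?_
    rw [Submodule.inf_orthogonal_eq_bot]
  have hW4 : finrank ℝ ((TangentSp f p ⊔ N1 f p : Submodule ℝ (Euc n))) = 4 := by
    have h := Submodule.finrank_sup_add_finrank_inf_eq (TangentSp f p) (N1 f p)
    rw [hTN1, hT2, hN1 p hp] at h
    simpa using h
  have hSW : span ℝ ({Zt f p - deltaLow f p, Jz f p + JperpDelta f p} : Set (Euc n))
      ≤ TangentSp f p ⊔ N1 f p := by
    apply span_le.mpr
    intro v hv
    simp only [Set.mem_insert_iff, Set.mem_singleton_iff] at hv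
    rcases hv with rfl | rfl
    · exact hv1W
    · exact hv2W
  have hdisj : span ℝ ({Zt f p - deltaLow f p, Jz f p + JperpDelta f p} : Set (Euc n))
      ⊓ (TangentSp f p ⊔ N1 f p)ᗮ = ⊥ := by
    apply le_antisymm _ bot_le
    refine le_trans (inf_le_inf_right _ hSW) ?_
    rw [Submodule.inf_orthogonal_eq_bot]
  have hRHS := Submodule.finrank_sup_add_finrank_inf_eq
    (span ℝ ({Zt f p - deltaLow f p, Jz f p + JperpDelta f p} : Set (Euc n)))
    ((TangentSp f p ⊔ N1 f p)ᗮ)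
  rw [hdisj, hS2] at hRHS
  simp only [finrank_bot, add_zero] at hRHS
  have hWperp := Submodule.finrank_add_finrank_orthogonal (K := TangentSp f p ⊔ N1 f p)
  have hTgperp := Submodule.finrank_add_finrank_orthogonal (K := TangentSp (pedal f) p)
  rw [hW4] at hWperp
  rw [hTg2] at hTgperp
  have hfr : finrank ℝ ((TangentSp (pedal f) p)ᗮ)
      ≤ finrank ℝ ((span ℝ ({Zt f p - deltaLow f p, Jz f p + JperpDelta f p} : Set (Euc n))
        ⊔ (TangentSp f p ⊔ N1 f p)ᗮ : Submodule ℝ (Euc n))) := by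
    omega
  exact (Submodule.eq_of_le_of_finrank_le hle hfr).symm
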